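/- arXiv:2101.08161 — 7 statements merged into one kernel-verified Lean document; each statement's English description precedes it below -/
import Mathlib

section
/- A rational number p/r ∈ (0,1) in lowest terms has a finite Cantor series expansion with respect to Q (equivalently, two distinct Cantor series representations) if and only if there exists n₀ such that r divides q_1 q_2 ⋯ q_{n₀}. -/
/-!
Clearing denominators, a finite expansion with digits `ε₀, …, ε_{N-1}` is the fraction
`m / (q₀ ⋯ q_{N-1})` whose numerator `m` is obtained from the digits by Horner's scheme, and
conversely every `m < q₀ ⋯ q_{N-1}` arises this way (mixed-radix representation). So `p / r` is
finite iff `p / r = m / (q₀ ⋯ q_{N-1})` for some `N` and `m`, i.e. iff `r ∣ p · q₀ ⋯ q_{N-1}`,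
which by coprimality means `r ∣ q₀ ⋯ q_{N-1}`.
-/

open Finset

namespace Cantor

def numerator (q ε : ℕ → ℕ) : ℕ → ℕ
  | 0 => 0
  | n + 1 => numerator q ε n * q n + ε n

variable {q ε ε' : ℕ → ℕ}

theorem numerator_congr {n : ℕ} (h : ∀ k < n, ε k = ε' k) :
    numerator q ε n = numerator q ε' n := by
  induction n with
  | zero => rfl
  | succ n ih =>
    simp only [numerator, h n n.lt_succ_self, ih fun k hk => h k (hk.trans n.lt_succ_self)]

theorem sum_div_prod_eq_numerator_div {K : Type*} [Field K] [CharZero K] (hq : ∀ i, q i ≠ 0)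
    (n : ℕ) :
    ∑ k ∈ range n, (ε k : K) / ∏ i ∈ range (k + 1), (q i : K) =
      numerator q ε n / ∏ i ∈ range n, (q i : K) := by
  induction n with
  | zero => simp [numerator]
  | succ n ih =>
    have hprod : ∏ i ∈ range n, (q i : K) ≠ 0 :=
      prod_ne_zero_iff.2 fun i _ => by exact_mod_cast hq i
    have hqn : (q n : K) ≠ 0 := by exact_mod_cast hq n
    rw [sum_range_succ, ih, prod_range_succ, numerator]
    push_cast
    field_simp

theorem tsum_div_prod_eq_numerator_div {N : ℕ} (hq : ∀ i, q i ≠ 0) (hε : ∀ k, N ≤ k → ε k = 0) :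
    ∑' k, (ε k : ℝ) / ∏ i ∈ range (k + 1), (q i : ℝ) =
      numerator q ε N / ∏ i ∈ range N, (q i : ℝ) := by
  rw [tsum_eq_sum (s := range N) fun k hk => by simp [hε k (by simpa using hk)],
    sum_div_prod_eq_numerator_div hq]

theorem exists_digits_numerator_eq (hq : ∀ i, q i ≠ 0) {n a : ℕ} (ha : a < ∏ i ∈ range n, q i) :
    ∃ ε : ℕ → ℕ, (∀ k, ε k < q k) ∧ (∀ k, n ≤ k → ε k = 0) ∧ numerator q ε n = a := by
  induction n generalizing a with
  | zero =>
    refine ⟨fun _ => 0, fun k => Nat.pos_of_ne_zero (hq k), fun _ _ => rfl, ?_⟩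
    simp_all [numerator]
  | succ n ih =>
    have hqn : 0 < q n := Nat.pos_of_ne_zero (hq n)
    rw [prod_range_succ, ← Nat.div_lt_iff_lt_mul hqn] at ha
    obtain ⟨ε, hε_lt, hε_zero, hε_num⟩ := ih ha
    refine ⟨Function.update ε n (a % q n), fun k => ?_, fun k hk => ?_, ?_⟩
    · rcases eq_or_ne k n with rfl | hk
      · simpa using Nat.mod_lt a hqn
      · simpa [hk] using hε_lt k
    · simpa [show k ≠ n by omega] using hε_zero k (by omega)
    · have hlow : numerator q (Function.update ε n (a % q n)) n = numerator q ε n :=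
        numerator_congr fun k hk => Function.update_of_ne hk.ne _ _
      rw [numerator, hlow, hε_num, Function.update_self, Nat.div_add_mod']

end Cantor

open Cantor in
theorem rational_finite_cantor_expansion_iff_general (q : ℕ → ℕ) (hq : ∀ k, 2 ≤ q k)
    (p r : ℕ) (hpr : p < r) (hcop : Nat.Coprime p r) :
    (∃ ε : ℕ → ℕ, (∀ k, ε k ≤ q k - 1) ∧ (∃ N, ∀ k, N ≤ k → ε k = 0) ∧
        (p : ℝ) / r = ∑' k : ℕ, (ε k : ℝ) / ∏ i ∈ Finset.range (k + 1), (q i : ℝ))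
      ↔ ∃ n₀ : ℕ, r ∣ ∏ i ∈ Finset.range n₀, q i := by
  have hq0 : ∀ i, q i ≠ 0 := fun i => by have := hq i; omega
  have hr : (r : ℝ) ≠ 0 := by exact_mod_cast (show r ≠ 0 by omega)
  have hprod (n : ℕ) : (∏ i ∈ range n, (q i : ℝ)) ≠ 0 :=
    prod_ne_zero_iff.2 fun i _ => by exact_mod_cast hq0 i
  constructor
  · rintro ⟨ε, -, ⟨N, hN⟩, hsum⟩
    rw [tsum_div_prod_eq_numerator_div hq0 hN, div_eq_div_iff hr (hprod N)] at hsum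
    have hdvd : r ∣ p * ∏ i ∈ range N, q i :=
      ⟨numerator q ε N, by exact_mod_cast hsum.trans (mul_comm _ _)⟩
    exact ⟨N, hcop.symm.dvd_of_dvd_mul_left hdvd⟩
  · rintro ⟨n₀, hdvd⟩
    obtain ⟨c, hc⟩ := hdvd
    have hlt : p * c < ∏ i ∈ range n₀, q i := by
      rw [hc]
      exact Nat.mul_lt_mul_of_pos_right hpr
        (Nat.pos_of_ne_zero fun h => by simp [h, prod_eq_zero_iff, hq0] at hc)
    obtain ⟨ε, hε_lt, hε_zero, hε_num⟩ := exists_digits_numerator_eq hq0 hlt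
    refine ⟨ε, fun k => by have := hε_lt k; omega, ⟨n₀, hε_zero⟩, ?_⟩
    rw [tsum_div_prod_eq_numerator_div hq0 hε_zero, hε_num, div_eq_div_iff hr (hprod n₀)]
    exact_mod_cast (show p * ∏ i ∈ range n₀, q i = p * c * r by rw [hc]; ring)

/-- A rational `p/r ∈ (0,1)` in lowest terms has a finite Cantor series
expansion w.r.t. `Q = (q_k)` iff `r ∣ q_1 q_2 ⋯ q_{n₀}` for some `n₀`. (0-based indexing.) -/
theorem rational_finite_cantor_expansion_iff (q : ℕ → ℕ) (hq : ∀ k, 2 ≤ q k)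
    (p r : ℕ) (hp : 0 < p) (hpr : p < r) (hcop : Nat.Coprime p r) :
    (∃ ε : ℕ → ℕ, (∀ k, ε k ≤ q k - 1) ∧ (∃ N, ∀ k, N ≤ k → ε k = 0) ∧
        (p : ℝ) / r = ∑' k : ℕ, (ε k : ℝ) / ∏ i ∈ Finset.range (k + 1), (q i : ℝ))
      ↔ ∃ n₀ : ℕ, r ∣ ∏ i ∈ Finset.range n₀, q i :=
  rational_finite_cantor_expansion_iff_general q hq p r hpr hcop
end

section
/- A number x given by a Cantor series ∑_{k=1}^∞ ε_k/(q_1⋯q_k) is rational if and only if there exist n ≥ 0 and m ≥ 1 such that σⁿ(x) = σ^{n+m}(x), where σ is the shift operator on the digit sequence. -/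
/-!
Shifting satisfies `σⁿ⁺¹(x) = q_n σⁿ(x) - ε_n`, so `σⁿ⁺ᵐ(x) = P σⁿ(x) - c` with `c` an integer and
`P = q_n ⋯ q_{n+m-1} ≥ 2ᵐ`. If `x = a / b`, every shift therefore lies in the finite set
`(1/b)ℤ ∩ [0, 2]`, and two of them coincide. Conversely `σⁿ(x) = σⁿ⁺ᵐ(x)` forces
`σⁿ(x) = c / (P - 1)`, and the same affine relation with `n = 0` carries rationality back to `x`.
-/

/-- The shift operator of a (positive) Cantor expansion:
`σⁿ(x) = ∑_{k=n+1}^∞ ε_k/(q_{n+1}⋯q_k)` (0-based indexing). -/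
noncomputable def cantorShift (q ε : ℕ → ℕ) (n : ℕ) : ℝ :=
  ∑' k : ℕ, (ε (n + k) : ℝ) / ∏ i ∈ Finset.Ico n (n + k + 1), (q i : ℝ)

open Finset

section
variable {q : ℕ → ℕ} {ε : ℕ → ℕ}

lemma two_pow_le_prod_Ico (hq : ∀ k, 2 ≤ q k) (n k : ℕ) :
    2 ^ k ≤ ∏ i ∈ Ico n (n + k), q i := by
  simpa [Nat.card_Ico] using pow_card_le_prod (Ico n (n + k)) q 2 fun i _ ↦ hq i

lemma cantorShift_term_le (hq : ∀ k, 2 ≤ q k) (hε : ∀ k, ε k ≤ q k) (n k : ℕ) :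
    (ε (n + k) : ℝ) / ∏ i ∈ Ico n (n + k + 1), (q i : ℝ) ≤ (1 / 2) ^ k := by
  have hP : (2 : ℝ) ^ k ≤ ∏ i ∈ Ico n (n + k), (q i : ℝ) := by
    exact_mod_cast two_pow_le_prod_Ico hq n k
  have hqk : (0 : ℝ) < q (n + k) := by have := hq (n + k); positivity
  have hεq : (ε (n + k) : ℝ) ≤ q (n + k) := mod_cast hε (n + k)
  rw [prod_Ico_succ_top (by omega)]
  calc (ε (n + k) : ℝ) / ((∏ i ∈ Ico n (n + k), (q i : ℝ)) * q (n + k))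
      ≤ q (n + k) / ((∏ i ∈ Ico n (n + k), (q i : ℝ)) * q (n + k)) := by gcongr
    _ = 1 / ∏ i ∈ Ico n (n + k), (q i : ℝ) := by field_simp
    _ ≤ (1 / 2) ^ k := by rw [div_pow, one_pow]; gcongr

lemma summable_cantorShift_term (hq : ∀ k, 2 ≤ q k) (hε : ∀ k, ε k ≤ q k) (n : ℕ) :
    Summable fun k ↦ (ε (n + k) : ℝ) / ∏ i ∈ Ico n (n + k + 1), (q i : ℝ) :=
  summable_geometric_two.of_nonneg_of_le (fun _ ↦ by positivity)
    (cantorShift_term_le hq hε n)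

lemma cantorShift_mem_Icc (hq : ∀ k, 2 ≤ q k) (hε : ∀ k, ε k ≤ q k) (n : ℕ) :
    cantorShift q ε n ∈ Set.Icc 0 2 := by
  refine ⟨tsum_nonneg fun _ ↦ by positivity, ?_⟩
  rw [← tsum_geometric_two]
  exact (summable_cantorShift_term hq hε n).tsum_le_tsum (cantorShift_term_le hq hε n)
    summable_geometric_two

lemma cantorShift_succ (hq : ∀ k, 2 ≤ q k) (hε : ∀ k, ε k ≤ q k) (n : ℕ) :
    cantorShift q ε (n + 1) = q n * cantorShift q ε n - ε n := by
  have hqn : (q n : ℝ) ≠ 0 := by have := hq n; positivity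
  have hterm (k : ℕ) : (ε (n + (k + 1)) : ℝ) / ∏ i ∈ Ico n (n + (k + 1) + 1), (q i : ℝ)
      = (q n : ℝ)⁻¹ * ((ε (n + 1 + k) : ℝ) / ∏ i ∈ Ico (n + 1) (n + 1 + k + 1), (q i : ℝ)) := by
    rw [prod_eq_prod_Ico_succ_bot (by omega), show n + (k + 1) = n + 1 + k by omega]
    field_simp
  have hfirst : cantorShift q ε n = ε n / q n + (q n : ℝ)⁻¹ * cantorShift q ε (n + 1) := by
    conv_lhs => rw [cantorShift, (summable_cantorShift_term hq hε n).tsum_eq_zero_add]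
    simp only [hterm, tsum_mul_left, add_zero, Nat.Ico_succ_singleton, prod_singleton, cantorShift]
  rw [hfirst]
  field_simp
  ring

lemma exists_cantorShift_add_eq (hq : ∀ k, 2 ≤ q k) (hε : ∀ k, ε k ≤ q k) (n m : ℕ) :
    ∃ c : ℤ, cantorShift q ε (n + m) = (∏ i ∈ Ico n (n + m), q i : ℕ) * cantorShift q ε n - c := by
  induction m with
  | zero => exact ⟨0, by simp⟩
  | succ m ih =>
    obtain ⟨c, hc⟩ := ih
    refine ⟨q (n + m) * c + ε (n + m), ?_⟩
    rw [← add_assoc, cantorShift_succ hq hε, hc, prod_Ico_succ_top (by omega)]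
    push_cast
    ring

lemma irrational_cantorShift_iff (hq : ∀ k, 2 ≤ q k) (hε : ∀ k, ε k ≤ q k) (n : ℕ) :
    Irrational (cantorShift q ε n) ↔ Irrational (cantorShift q ε 0) := by
  obtain ⟨c, hc⟩ := exists_cantorShift_add_eq hq hε 0 n
  rw [zero_add] at hc
  rw [hc, irrational_sub_intCast_iff, irrational_natCast_mul_iff,
    and_iff_right (prod_ne_zero_iff.mpr fun i _ ↦ by have := hq i; omega)]

lemma not_irrational_cantorShift_of_eq (hq : ∀ k, 2 ≤ q k) (hε : ∀ k, ε k ≤ q k) {n m : ℕ}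
    (hm : 1 ≤ m) (h : cantorShift q ε n = cantorShift q ε (n + m)) :
    ¬Irrational (cantorShift q ε n) := by
  obtain ⟨c, hc⟩ := exists_cantorShift_add_eq hq hε n m
  set P := ∏ i ∈ Ico n (n + m), q i
  have hP : (2 : ℝ) ≤ P := by
    exact_mod_cast (Nat.le_self_pow (by omega) 2).trans (two_pow_le_prod_Ico hq n m)
  have hσ : cantorShift q ε n = c / (P - 1) := by
    rw [eq_div_iff (by linarith)]
    linarith
  rw [hσ]
  exact_mod_cast Rat.not_irrational (c / (P - 1))

lemma exists_int_div_den_eq_cantorShift (hq : ∀ k, 2 ≤ q k) (hε : ∀ k, ε k ≤ q k) {r : ℚ}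
    (hr : cantorShift q ε 0 = r) (n : ℕ) : ∃ a : ℤ, cantorShift q ε n = a / r.den := by
  obtain ⟨c, hc⟩ := exists_cantorShift_add_eq hq hε 0 n
  rw [zero_add] at hc
  refine ⟨(∏ i ∈ Ico 0 n, q i : ℕ) * r.num - c * r.den, ?_⟩
  rw [hc, hr, Rat.cast_def]
  push_cast
  field_simp

lemma exists_cantorShift_eq_add_of_rat (hq : ∀ k, 2 ≤ q k) (hε : ∀ k, ε k ≤ q k) {r : ℚ}
    (hr : cantorShift q ε 0 = r) :
    ∃ n m : ℕ, 1 ≤ m ∧ cantorShift q ε n = cantorShift q ε (n + m) := by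
  have hden : (0 : ℝ) < r.den := by positivity
  have hmem (n : ℕ) :
      cantorShift q ε n ∈ (fun a : ℤ ↦ (a : ℝ) / r.den) '' Set.Icc 0 (2 * r.den) := by
    obtain ⟨a, ha⟩ := exists_int_div_den_eq_cantorShift hq hε hr n
    obtain ⟨h0, h2⟩ := cantorShift_mem_Icc hq hε n
    rw [ha, le_div_iff₀ hden, zero_mul] at h0
    rw [ha, div_le_iff₀ hden] at h2
    exact ⟨a, ⟨by exact_mod_cast h0, by exact_mod_cast h2⟩, ha.symm⟩
  obtain ⟨n, n', hlt, heq⟩ := Set.Finite.exists_lt_map_eq_of_forall_mem hmem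
    ((Set.finite_Icc _ _).image _)
  exact ⟨n, n' - n, by omega, by rwa [Nat.add_sub_cancel' hlt.le]⟩

end

/-- A number `x` given by a Cantor series is rational iff
`σⁿ(x) = σ^{n+m}(x)` for some `n ≥ 0`, `m ≥ 1`. -/
theorem cantor_rational_iff_shift_eq (q ε : ℕ → ℕ) (hq : ∀ k, 2 ≤ q k)
    (hε : ∀ k, ε k ≤ q k - 1) (x : ℝ)
    (hx : x = ∑' k : ℕ, (ε k : ℝ) / ∏ i ∈ Finset.range (k + 1), (q i : ℝ)) :
    (∃ r : ℚ, x = (r : ℝ)) ↔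
      ∃ n m : ℕ, 1 ≤ m ∧ cantorShift q ε n = cantorShift q ε (n + m) := by
  have hx0 : x = cantorShift q ε 0 := by simp only [hx, cantorShift, zero_add, Finset.range_eq_Ico]
  have hεq (k : ℕ) : ε k ≤ q k := (hε k).trans (Nat.sub_le _ _)
  rw [hx0]
  constructor
  · rintro ⟨r, hr⟩
    exact exists_cantorShift_eq_add_of_rat hq hεq hr
  · rintro ⟨n, m, hm, h⟩
    have hrat := (irrational_cantorShift_iff hq hεq n).not.mp
      (not_irrational_cantorShift_of_eq hq hεq hm h)
    simpa [Irrational, eq_comm] using hrat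
end

section
/- Every real number x in the interval [a', a''] admits a representation x = ∑_{n=1}^∞ a_n ε_n/(q_1⋯q_n) with digits ε_n ∈ {0, …, q_n − 1}, where a' = −∑_{k ∈ N_B} (q_k − 1)/(q_1⋯q_k) and a'' = 1 − ∑_{k ∈ N_B} (q_k − 1)/(q_1⋯q_k). -/
/-!
With `S = ∑_{k ∈ B} (q_k - 1)/(q_1⋯q_k)`, the number `y = x + S` lies in `[0, 1]` and so has an
ordinary Cantor expansion `y = ∑ δ_n/(q_1⋯q_n)`: its digits are read off the floors
`⌊y q_1⋯q_n⌋`, or are all maximal when `y = 1`. Complementing the digits on `B`,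
`ε_n = q_n - 1 - δ_n`, turns the signed term `-ε_n/(q_1⋯q_n)` into
`δ_n/(q_1⋯q_n) - (q_n - 1)/(q_1⋯q_n)`, so the signed series sums to `y - S = x`.
-/

-- The sign `a_n`: `-1` if `n ∈ N_B`, `1` otherwise.
open Classical in
noncomputable def cantorSign (B : Set ℕ) (n : ℕ) : ℝ :=
  if n ∈ B then -1 else 1

open Filter Topology Finset

theorem hasSum_sub_of_le_succ_of_tendsto {u : ℕ → ℝ} {l : ℝ} (hu : ∀ n, u n ≤ u (n + 1))
    (h : Tendsto u atTop (𝓝 l)) : HasSum (fun n ↦ u (n + 1) - u n) (l - u 0) := by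
  rw [hasSum_iff_tendsto_nat_of_nonneg fun n ↦ sub_nonneg.2 (hu n)]
  simpa only [sum_range_sub] using h.sub_const (u 0)

section Floor

variable {R : Type*} [Semiring R] [LinearOrder R] [IsStrictOrderedRing R] [FloorSemiring R]

theorem Nat.mul_floor_le_floor_mul {a : R} (ha : 0 ≤ a) (m : ℕ) : m * ⌊a⌋₊ ≤ ⌊m * a⌋₊ :=
  Nat.le_floor <| by
    push_cast
    exact mul_le_mul_of_nonneg_left (Nat.floor_le ha) m.cast_nonneg

theorem Nat.floor_mul_lt_mul_floor_add_one {a : R} (ha : 0 ≤ a) {m : ℕ} (hm : 0 < m) :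
    ⌊m * a⌋₊ < m * (⌊a⌋₊ + 1) :=
  (Nat.floor_lt (mul_nonneg m.cast_nonneg ha)).2 <| by
    push_cast
    exact mul_lt_mul_of_pos_left (Nat.lt_floor_add_one a) (Nat.cast_pos.2 hm)

end Floor

namespace CantorSeries

noncomputable def denom (q : ℕ → ℕ) (n : ℕ) : ℝ := ∏ i ∈ range n, (q i : ℝ)

variable {q : ℕ → ℕ}

theorem denom_succ (n : ℕ) : denom q (n + 1) = denom q n * q n := prod_range_succ _ _

theorem denom_pos (hq : ∀ k, 2 ≤ q k) (n : ℕ) : 0 < denom q n :=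
  prod_pos fun i _ ↦ Nat.cast_pos.2 (by linarith [hq i])

theorem tendsto_denom_atTop (hq : ∀ k, 2 ≤ q k) : Tendsto (denom q) atTop atTop := by
  have two_pow_le (n : ℕ) : (2 : ℝ) ^ n ≤ denom q n := by
    simpa [denom] using prod_le_prod (s := range n) (f := fun _ ↦ (2 : ℝ))
      (fun _ _ ↦ zero_le_two) fun i _ ↦ (by exact_mod_cast hq i)
  exact tendsto_atTop_mono two_pow_le (tendsto_pow_atTop_atTop_of_one_lt one_lt_two)

theorem hasSum_sub_one_div_denom (hq : ∀ k, 2 ≤ q k) :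
    HasSum (fun n ↦ ((q n : ℝ) - 1) / denom q (n + 1)) 1 := by
  have hterm (n : ℕ) : ((q n : ℝ) - 1) / denom q (n + 1) =
      (1 - (denom q (n + 1))⁻¹) - (1 - (denom q n)⁻¹) := by
    have := (denom_pos hq n).ne'
    have : (q n : ℝ) ≠ 0 := Nat.cast_ne_zero.2 (by linarith [hq n])
    rw [denom_succ]
    field_simp
    ring
  have hlim : Tendsto (fun n ↦ 1 - (denom q n)⁻¹) atTop (𝓝 1) := by
    simpa using ((tendsto_denom_atTop hq).inv_tendsto_atTop).const_sub 1
  have hmono (n : ℕ) : 1 - (denom q n)⁻¹ ≤ 1 - (denom q (n + 1))⁻¹ := by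
    rw [← sub_nonneg, ← hterm]
    have : (2 : ℝ) ≤ q n := by exact_mod_cast hq n
    exact div_nonneg (by linarith) (denom_pos hq _).le
  convert hasSum_sub_of_le_succ_of_tendsto hmono hlim using 1
  · exact funext hterm
  · simp [denom]

theorem exists_digits_hasSum_of_lt_one (hq : ∀ k, 2 ≤ q k) {y : ℝ} (hy0 : 0 ≤ y) (hy1 : y < 1) :
    ∃ δ : ℕ → ℕ, (∀ n, δ n ≤ q n - 1) ∧ HasSum (fun n ↦ (δ n : ℝ) / denom q (n + 1)) y := by
  set s : ℕ → ℕ := fun n ↦ ⌊y * denom q n⌋₊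
  have hs_succ (n : ℕ) : s (n + 1) = ⌊(q n : ℝ) * (y * denom q n)⌋₊ := by
    simp only [s, denom_succ]
    ring_nf
  have hy_denom (n : ℕ) : 0 ≤ y * denom q n := mul_nonneg hy0 (denom_pos hq n).le
  have hle (n : ℕ) : q n * s n ≤ s (n + 1) :=
    hs_succ n ▸ Nat.mul_floor_le_floor_mul (hy_denom n) (q n)
  have hlt (n : ℕ) : s (n + 1) < q n * s n + q n :=
    hs_succ n ▸ Nat.floor_mul_lt_mul_floor_add_one (hy_denom n) (by linarith [hq n])
  refine ⟨fun n ↦ s (n + 1) - q n * s n, fun n ↦ by beta_reduce; have := hlt n; omega, ?_⟩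
  set u : ℕ → ℝ := fun n ↦ s n / denom q n
  have hterm (n : ℕ) : ((s (n + 1) - q n * s n : ℕ) : ℝ) / denom q (n + 1) = u (n + 1) - u n := by
    have := (denom_pos hq n).ne'
    have : (q n : ℝ) ≠ 0 := Nat.cast_ne_zero.2 (by linarith [hq n])
    simp only [u, Nat.cast_sub (hle n), denom_succ, Nat.cast_mul]
    field_simp
  have hmono (n : ℕ) : u n ≤ u (n + 1) := by
    rw [← sub_nonneg, ← hterm]
    exact div_nonneg (Nat.cast_nonneg _) (denom_pos hq _).le
  have hlim : Tendsto u atTop (𝓝 y) :=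
    (tendsto_nat_floor_mul_div_atTop hy0).comp (tendsto_denom_atTop hq)
  convert hasSum_sub_of_le_succ_of_tendsto hmono hlim using 1
  · exact funext hterm
  · simp [u, s, denom, Nat.floor_eq_zero.2 hy1]

theorem exists_digits_hasSum (hq : ∀ k, 2 ≤ q k) {y : ℝ} (hy : y ∈ Set.Icc 0 1) :
    ∃ δ : ℕ → ℕ, (∀ n, δ n ≤ q n - 1) ∧ HasSum (fun n ↦ (δ n : ℝ) / denom q (n + 1)) y := by
  obtain hy1 | rfl := hy.2.lt_or_eq
  · exact exists_digits_hasSum_of_lt_one hq hy.1 hy1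
  · refine ⟨fun n ↦ q n - 1, fun _ ↦ le_rfl, ?_⟩
    convert hasSum_sub_one_div_denom hq using 3 with n
    exact Nat.cast_pred (by linarith [hq n])

open Classical in
noncomputable def flipDigits (B : Set ℕ) (q δ : ℕ → ℕ) (n : ℕ) : ℕ :=
  if n ∈ B then q n - 1 - δ n else δ n

theorem flipDigits_le {B : Set ℕ} {δ : ℕ → ℕ} (hδ : ∀ n, δ n ≤ q n - 1) (n : ℕ) :
    flipDigits B q δ n ≤ q n - 1 := by
  unfold flipDigits
  split_ifs
  exacts [Nat.sub_le _ _, hδ n]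

theorem cantorSign_mul_flipDigits_div (B : Set ℕ) {δ : ℕ → ℕ} {n : ℕ} (hq : 1 ≤ q n)
    (hδ : δ n ≤ q n - 1) :
    cantorSign B n * flipDigits B q δ n / denom q (n + 1) =
      δ n / denom q (n + 1) - B.indicator (fun k ↦ ((q k : ℝ) - 1) / denom q (k + 1)) n := by
  by_cases hn : n ∈ B
  · simp only [cantorSign, flipDigits, if_pos hn, Set.indicator_of_mem hn,
      Nat.cast_sub hδ, Nat.cast_sub hq, Nat.cast_one]
    ring
  · simp [cantorSign, flipDigits, hn]

theorem hasSum_cantorSign_mul_flipDigits_div (B : Set ℕ) (hq : ∀ k, 2 ≤ q k) {δ : ℕ → ℕ}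
    (hδ : ∀ n, δ n ≤ q n - 1) {y : ℝ} (hy : HasSum (fun n ↦ (δ n : ℝ) / denom q (n + 1)) y) :
    HasSum (fun n ↦ cantorSign B n * flipDigits B q δ n / denom q (n + 1))
      (y - ∑' k, B.indicator (fun k ↦ ((q k : ℝ) - 1) / denom q (k + 1)) k) := by
  have hterm (n : ℕ) := cantorSign_mul_flipDigits_div B (by linarith [hq n]) (hδ n)
  simp_rw [hterm]
  exact hy.sub ((hasSum_sub_one_div_denom hq).summable.indicator B).hasSum

end CantorSeries

open CantorSeries in
/-- Every `x ∈ [a', a'']`, with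
`a' = −∑_{k ∈ N_B} (q_k−1)/(q_1⋯q_k)` and `a'' = 1 + a'`, admits a sign-variable Cantor
series representation `x = ∑ a_n ε_n/(q_1⋯q_n)` with digits `0 ≤ ε_n ≤ q_n − 1`.
(0-based indexing.) -/
theorem exists_sign_variable_cantor_representation (B : Set ℕ) (q : ℕ → ℕ)
    (hq : ∀ k, 2 ≤ q k) (x : ℝ)
    (hx : x ∈ Set.Icc
      (-(∑' k : ℕ, Set.indicator B
          (fun k => ((q k : ℝ) - 1) / ∏ i ∈ Finset.range (k + 1), (q i : ℝ)) k))
      (1 - ∑' k : ℕ, Set.indicator B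
          (fun k => ((q k : ℝ) - 1) / ∏ i ∈ Finset.range (k + 1), (q i : ℝ)) k)) :
    ∃ ε : ℕ → ℕ, (∀ n, ε n ≤ q n - 1) ∧
      x = ∑' n : ℕ, cantorSign B n * (ε n : ℝ) / ∏ i ∈ Finset.range (n + 1), (q i : ℝ) := by
  set S := ∑' k : ℕ, B.indicator
    (fun k ↦ ((q k : ℝ) - 1) / ∏ i ∈ Finset.range (k + 1), (q i : ℝ)) k
  obtain ⟨δ, hδ, hδ_sum⟩ := exists_digits_hasSum hq (y := x + S)
    ⟨by linarith [hx.1], by linarith [hx.2]⟩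
  have hsum := hasSum_cantorSign_mul_flipDigits_div B hq hδ hδ_sum
  refine ⟨flipDigits B q δ, flipDigits_le hδ, ?_⟩
  exact (hsum.tsum_eq.trans (add_sub_cancel_right x S)).symm
end

section
/- The cylinder Λ_{c_1…c_m} of rank m of a sign-variable Cantor expansion, i.e., the set of all sums ∑_{i=1}^{m} a_i c_i/(q_1⋯q_i) + ∑_{j=m+1}^∞ a_j ε_j/(q_1⋯q_j) over all admissible digit choices ε_j ∈ {0,…,q_j−1}, equals the closed interval [S − ∑_{m < k, k ∈ N_B} (q_k−1)/(q_1⋯q_k), S + ∑_{m < k, k ∉ N_B} (q_k−1)/(q_1⋯q_k)], where S = ∑_{i=1}^{m} a_i c_i/(q_1⋯q_i). -/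
open Filter Topology Finset

noncomputable def cantorProd (q : ℕ → ℕ) (n : ℕ) : ℝ := ∏ i ∈ range n, (q i : ℝ)

noncomputable def maxDigitTerm (q : ℕ → ℕ) (n : ℕ) : ℝ :=
  ((q n : ℝ) - 1) / cantorProd q (n + 1)

noncomputable def cantorDigit (q : ℕ → ℕ) (y : ℝ) (n : ℕ) : ℕ :=
  ⌊y * cantorProd q (n + 1)⌋₊ % q n

open Classical in
noncomputable def reflectDigits (B : Set ℕ) (q ε : ℕ → ℕ) (n : ℕ) : ℕ :=
  if n ∈ B then q n - 1 - ε n else ε n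

lemma hasSum_sub_of_monotone {u : ℕ → ℝ} {l : ℝ} (hu : Monotone u)
    (hl : Tendsto u atTop (𝓝 l)) : HasSum (fun n => u (n + 1) - u n) (l - u 0) := by
  rw [hasSum_iff_tendsto_nat_of_nonneg fun n => sub_nonneg.2 (hu n.le_succ)]
  simp only [sum_range_sub]
  exact hl.sub_const _

section CantorProd

variable {q : ℕ → ℕ}

lemma cantorProd_succ (q : ℕ → ℕ) (n : ℕ) : cantorProd q (n + 1) = cantorProd q n * q n :=
  prod_range_succ _ _

lemma cantorProd_pos (hq : ∀ k, 0 < q k) (n : ℕ) : 0 < cantorProd q n :=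
  prod_pos fun i _ => Nat.cast_pos.2 (hq i)

lemma tendsto_cantorProd_atTop (hq : ∀ k, 2 ≤ q k) : Tendsto (cantorProd q) atTop atTop := by
  refine tendsto_atTop_mono (fun n => ?_) (tendsto_pow_atTop_atTop_of_one_lt one_lt_two)
  calc (2 : ℝ) ^ n = ∏ _i ∈ range n, (2 : ℝ) := by simp
    _ ≤ cantorProd q n := prod_le_prod (fun _ _ => zero_le_two) fun i _ => by exact_mod_cast hq i

lemma tendsto_inv_cantorProd_add (hq : ∀ k, 2 ≤ q k) (m : ℕ) :
    Tendsto (fun j => (cantorProd q (m + j))⁻¹) atTop (𝓝 0) := by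
  simpa only [Function.comp_def, add_comm] using
    tendsto_inv_atTop_zero.comp ((tendsto_cantorProd_atTop hq).comp (tendsto_add_atTop_nat m))

end CantorProd

section Digits

variable {q : ℕ → ℕ}

lemma maxDigitTerm_nonneg (hq : ∀ k, 0 < q k) (n : ℕ) : 0 ≤ maxDigitTerm q n :=
  div_nonneg (sub_nonneg.2 (Nat.one_le_cast.2 (hq n))) (cantorProd_pos hq _).le

lemma hasSum_maxDigitTerm (hq : ∀ k, 2 ≤ q k) (m : ℕ) :
    HasSum (fun j => maxDigitTerm q (m + j)) (cantorProd q m)⁻¹ := by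
  have hq₀ : ∀ k, 0 < q k := fun k => zero_lt_two.trans_le (hq k)
  have step : ∀ j, maxDigitTerm q (m + j)
      = -(cantorProd q (m + (j + 1)))⁻¹ - -(cantorProd q (m + j))⁻¹ := by
    intro j
    have hP := (cantorProd_pos hq₀ (m + j)).ne'
    have hqj : (q (m + j) : ℝ) ≠ 0 := Nat.cast_ne_zero.2 (hq₀ _).ne'
    rw [maxDigitTerm, ← add_assoc, cantorProd_succ]
    field_simp
    ring
  have hmono : Monotone fun j => -(cantorProd q (m + j))⁻¹ := by
    refine monotone_nat_of_le_succ fun j => neg_le_neg (inv_anti₀ (cantorProd_pos hq₀ _) ?_)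
    rw [← add_assoc, cantorProd_succ]
    exact le_mul_of_one_le_right (cantorProd_pos hq₀ _).le (Nat.one_le_cast.2 (hq₀ _))
  simpa [step] using hasSum_sub_of_monotone hmono (tendsto_inv_cantorProd_add hq m).neg

lemma summable_indicator_maxDigitTerm (hq : ∀ k, 2 ≤ q k) (s : Set ℕ) (m : ℕ) :
    Summable fun k => s.indicator (maxDigitTerm q) (m + k) := by
  have hnn := maxDigitTerm_nonneg fun k => zero_lt_two.trans_le (hq k)
  exact (hasSum_maxDigitTerm hq m).summable.of_nonneg_of_le
    (fun k => Set.indicator_nonneg (fun n _ => hnn n) _)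
    (fun k => Set.indicator_le_self' (fun n _ => hnn n) _)

lemma tsum_indicator_maxDigitTerm_add_compl (hq : ∀ k, 2 ≤ q k) (B : Set ℕ) (m : ℕ) :
    ∑' k, B.indicator (maxDigitTerm q) (m + k) + ∑' k, Bᶜ.indicator (maxDigitTerm q) (m + k)
      = (cantorProd q m)⁻¹ := by
  rw [← (summable_indicator_maxDigitTerm hq B m).tsum_add
    (summable_indicator_maxDigitTerm hq Bᶜ m)]
  simp only [Set.indicator_self_add_compl_apply]
  exact (hasSum_maxDigitTerm hq m).tsum_eq

lemma digit_div_le_maxDigitTerm (hq : ∀ k, 0 < q k) {d : ℕ → ℕ} (n : ℕ) (hd : d n < q n) :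
    (d n : ℝ) / cantorProd q (n + 1) ≤ maxDigitTerm q n := by
  have : (d n : ℝ) + 1 ≤ q n := by exact_mod_cast hd
  exact div_le_div_of_nonneg_right (le_sub_iff_add_le.2 this) (cantorProd_pos hq _).le

lemma exists_hasSum_digits_mem_Icc (hq : ∀ k, 2 ≤ q k) {d : ℕ → ℕ} (hd : ∀ n, d n < q n)
    (m : ℕ) : ∃ T ∈ Set.Icc 0 (cantorProd q m)⁻¹,
      HasSum (fun j => (d (m + j) : ℝ) / cantorProd q (m + j + 1)) T := by
  have hq₀ : ∀ k, 0 < q k := fun k => zero_lt_two.trans_le (hq k)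
  have hnn : ∀ j, 0 ≤ (d (m + j) : ℝ) / cantorProd q (m + j + 1) :=
    fun j => div_nonneg (Nat.cast_nonneg _) (cantorProd_pos hq₀ _).le
  have hle := fun j => digit_div_le_maxDigitTerm hq₀ (m + j) (hd (m + j))
  have hsum := (hasSum_maxDigitTerm hq m).summable.of_nonneg_of_le hnn hle
  exact ⟨_, ⟨tsum_nonneg hnn, hasSum_le hle hsum.hasSum (hasSum_maxDigitTerm hq m)⟩,
    hsum.hasSum⟩

lemma cantorDigit_lt (hq : ∀ k, 0 < q k) (y : ℝ) (n : ℕ) : cantorDigit q y n < q n :=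
  Nat.mod_lt _ (hq n)

lemma floor_mul_cantorProd_succ (hq : ∀ k, 0 < q k) (y : ℝ) (n : ℕ) :
    ⌊y * cantorProd q (n + 1)⌋₊ = q n * ⌊y * cantorProd q n⌋₊ + cantorDigit q y n := by
  have hqn : (q n : ℝ) ≠ 0 := Nat.cast_ne_zero.2 (hq n).ne'
  have : ⌊y * cantorProd q n⌋₊ = ⌊y * cantorProd q (n + 1)⌋₊ / q n := by
    rw [← Nat.floor_div_natCast, cantorProd_succ, ← mul_assoc, mul_div_cancel_right₀ _ hqn]
  rw [this, cantorDigit, Nat.div_add_mod]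

lemma hasSum_cantorDigit (hq : ∀ k, 2 ≤ q k) {y : ℝ} (hy : 0 ≤ y) (m : ℕ) :
    HasSum (fun j => (cantorDigit q y (m + j) : ℝ) / cantorProd q (m + j + 1))
      (y - ⌊y * cantorProd q m⌋₊ / cantorProd q m) := by
  have hq₀ : ∀ k, 0 < q k := fun k => zero_lt_two.trans_le (hq k)
  set u : ℕ → ℝ := fun j => ⌊y * cantorProd q (m + j)⌋₊ / cantorProd q (m + j)
  have step : ∀ j, u (j + 1) - u j
      = (cantorDigit q y (m + j) : ℝ) / cantorProd q (m + j + 1) := by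
    intro j
    have hP := (cantorProd_pos hq₀ (m + j)).ne'
    have hqj : (q (m + j) : ℝ) ≠ 0 := Nat.cast_ne_zero.2 (hq₀ _).ne'
    simp only [u, ← add_assoc]
    rw [floor_mul_cantorProd_succ hq₀, cantorProd_succ]
    push_cast
    field_simp
    ring
  have hmono : Monotone u := monotone_nat_of_le_succ fun j => by
    rw [← sub_nonneg, step]
    exact div_nonneg (Nat.cast_nonneg _) (cantorProd_pos hq₀ _).le
  have hlim : Tendsto u atTop (𝓝 y) := by
    refine tendsto_of_tendsto_of_tendsto_of_le_of_le
      (by simpa using (tendsto_inv_cantorProd_add hq m).const_sub y) tendsto_const_nhds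
      (fun j => ?_) (fun j => ?_)
    all_goals
      have hP := cantorProd_pos hq₀ (m + j)
      simp only [u]
    · rw [le_div_iff₀ hP, sub_mul, inv_mul_cancel₀ hP.ne']
      exact (Nat.sub_one_lt_floor _).le
    · rw [div_le_iff₀ hP]
      exact Nat.floor_le (mul_nonneg hy hP.le)
  simpa [step, u] using hasSum_sub_of_monotone hmono hlim

lemma exists_digits_hasSum (hq : ∀ k, 2 ≤ q k) {m : ℕ} {y : ℝ}
    (hy : y ∈ Set.Icc 0 (cantorProd q m)⁻¹) :
    ∃ d : ℕ → ℕ, (∀ n, d n < q n) ∧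
      HasSum (fun j => (d (m + j) : ℝ) / cantorProd q (m + j + 1)) y := by
  have hq₀ : ∀ k, 0 < q k := fun k => zero_lt_two.trans_le (hq k)
  rcases hy.2.lt_or_eq with hlt | rfl
  · have hfloor : ⌊y * cantorProd q m⌋₊ = 0 :=
      Nat.floor_eq_zero.2 ((lt_inv_mul_iff₀' (cantorProd_pos hq₀ m)).1 (by rwa [mul_one]))
    exact ⟨cantorDigit q y, cantorDigit_lt hq₀ y, by
      simpa [hfloor] using hasSum_cantorDigit hq hy.1 m⟩
  · refine ⟨fun n => q n - 1, fun n => Nat.sub_lt (hq₀ n) one_pos, ?_⟩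
    simpa [maxDigitTerm, Nat.cast_pred (hq₀ _)] using hasSum_maxDigitTerm hq m

end Digits

section Reflection

variable {B : Set ℕ} {q d : ℕ → ℕ}

lemma reflectDigits_lt (hd : ∀ n, d n < q n) (n : ℕ) : reflectDigits B q d n < q n := by
  have := hd n
  unfold reflectDigits
  split_ifs <;> omega

lemma reflectDigits_reflectDigits (hd : ∀ n, d n < q n) :
    reflectDigits B q (reflectDigits B q d) = d := by
  funext n
  have := hd n
  unfold reflectDigits
  split_ifs <;> omega

lemma cantorSign_mul_reflectDigits_div {n : ℕ} (hd : d n < q n) :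
    cantorSign B n * reflectDigits B q d n / cantorProd q (n + 1)
      = d n / cantorProd q (n + 1) - B.indicator (maxDigitTerm q) n := by
  unfold cantorSign reflectDigits
  split_ifs with h
  · rw [Set.indicator_of_mem h, maxDigitTerm, Nat.sub_sub, Nat.cast_sub (by omega)]
    push_cast
    ring
  · rw [Set.indicator_of_notMem h]
    ring

lemma hasSum_cantorSign_mul_reflectDigits (hq : ∀ k, 2 ≤ q k) (hd : ∀ n, d n < q n)
    {m : ℕ} {T : ℝ} (hT : HasSum (fun j => (d (m + j) : ℝ) / cantorProd q (m + j + 1)) T) :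
    HasSum
      (fun j => cantorSign B (m + j) * reflectDigits B q d (m + j) / cantorProd q (m + j + 1))
      (T - ∑' k, B.indicator (maxDigitTerm q) (m + k)) := by
  simp only [cantorSign_mul_reflectDigits_div (hd _)]
  exact hT.sub (summable_indicator_maxDigitTerm hq B m).hasSum

end Reflection

lemma setOf_add_tsum_cantorSign_eq_Icc (B : Set ℕ) {q : ℕ → ℕ} (hq : ∀ k, 2 ≤ q k)
    (m : ℕ) (S : ℝ) :
    {x : ℝ | ∃ ε : ℕ → ℕ, (∀ j, ε j < q j) ∧
        x = S + ∑' j, cantorSign B (m + j) * ε (m + j) / cantorProd q (m + j + 1)}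
      = Set.Icc (S - ∑' k, B.indicator (maxDigitTerm q) (m + k))
          (S + ∑' k, Bᶜ.indicator (maxDigitTerm q) (m + k)) := by
  have hLU := tsum_indicator_maxDigitTerm_add_compl hq B m
  set L := ∑' k, B.indicator (maxDigitTerm q) (m + k)
  ext x
  constructor
  · rintro ⟨ε, hε, rfl⟩
    obtain ⟨T, hT, hsum⟩ := exists_hasSum_digits_mem_Icc hq (reflectDigits_lt (B := B) hε) m
    have := hasSum_cantorSign_mul_reflectDigits (B := B) hq (reflectDigits_lt hε) hsum
    rw [reflectDigits_reflectDigits hε] at this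
    rw [this.tsum_eq]
    constructor <;> linarith [hT.1, hT.2]
  · rintro ⟨hlow, hupp⟩
    obtain ⟨d, hd, hsum⟩ :=
      exists_digits_hasSum hq (y := x - S + L) ⟨by linarith, by rw [← hLU]; linarith⟩
    refine ⟨reflectDigits B q d, reflectDigits_lt hd, ?_⟩
    rw [(hasSum_cantorSign_mul_reflectDigits hq hd hsum).tsum_eq]
    ring

-- Indices are 0-based: the fixed digits are `c 0, …, c (m - 1)`.
theorem sign_variable_cylinder_eq_Icc_general (B : Set ℕ) (q : ℕ → ℕ) (hq : ∀ k, 2 ≤ q k)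
    (m : ℕ) (c : ℕ → ℕ) :
    {x : ℝ | ∃ ε : ℕ → ℕ, (∀ j, ε j ≤ q j - 1) ∧
        x = (∑ i ∈ Finset.range m,
              cantorSign B i * (c i : ℝ) / ∏ j ∈ Finset.range (i + 1), (q j : ℝ))
          + ∑' j : ℕ, cantorSign B (m + j) * (ε (m + j) : ℝ)
              / ∏ i ∈ Finset.range (m + j + 1), (q i : ℝ)}
      = Set.Icc
        ((∑ i ∈ Finset.range m,
            cantorSign B i * (c i : ℝ) / ∏ j ∈ Finset.range (i + 1), (q j : ℝ))
          - ∑' k : ℕ, Set.indicator B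
              (fun n => ((q n : ℝ) - 1) / ∏ i ∈ Finset.range (n + 1), (q i : ℝ)) (m + k))
        ((∑ i ∈ Finset.range m,
            cantorSign B i * (c i : ℝ) / ∏ j ∈ Finset.range (i + 1), (q j : ℝ))
          + ∑' k : ℕ, Set.indicator Bᶜ
              (fun n => ((q n : ℝ) - 1) / ∏ i ∈ Finset.range (n + 1), (q i : ℝ)) (m + k)) := by
  have hP : ∀ n, ∏ i ∈ range n, (q i : ℝ) = cantorProd q n := fun _ => rfl
  have hM : (fun n => ((q n : ℝ) - 1) / cantorProd q (n + 1)) = maxDigitTerm q := rfl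
  have hdigit : ∀ j d, d ≤ q j - 1 ↔ d < q j := fun j d => by have := hq j; omega
  simp only [hP, hM, hdigit]
  exact setOf_add_tsum_cantorSign_eq_Icc B hq m _

/-- The cylinder `Λ_{c_1…c_m}` of a sign-variable Cantor expansion equals
the closed interval `[S − ∑_{m<k, k∈N_B}(q_k−1)/(q_1⋯q_k), S + ∑_{m<k, k∉N_B}(q_k−1)/(q_1⋯q_k)]`
where `S = ∑_{i=1}^m a_i c_i/(q_1⋯q_i)`. (0-based indexing: the base digits are
`c 0, …, c (m-1)`.) -/
theorem sign_variable_cylinder_eq_Icc (B : Set ℕ) (q : ℕ → ℕ) (hq : ∀ k, 2 ≤ q k)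
    (m : ℕ) (c : ℕ → ℕ) (hc : ∀ i, i < m → c i ≤ q i - 1) :
    {x : ℝ | ∃ ε : ℕ → ℕ, (∀ j, ε j ≤ q j - 1) ∧
        x = (∑ i ∈ Finset.range m,
              cantorSign B i * (c i : ℝ) / ∏ j ∈ Finset.range (i + 1), (q j : ℝ))
          + ∑' j : ℕ, cantorSign B (m + j) * (ε (m + j) : ℝ)
              / ∏ i ∈ Finset.range (m + j + 1), (q i : ℝ)}
      = Set.Icc
        ((∑ i ∈ Finset.range m,
            cantorSign B i * (c i : ℝ) / ∏ j ∈ Finset.range (i + 1), (q j : ℝ))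
          - ∑' k : ℕ, Set.indicator B
              (fun n => ((q n : ℝ) - 1) / ∏ i ∈ Finset.range (n + 1), (q i : ℝ)) (m + k))
        ((∑ i ∈ Finset.range m,
            cantorSign B i * (c i : ℝ) / ∏ j ∈ Finset.range (i + 1), (q j : ℝ))
          + ∑' k : ℕ, Set.indicator Bᶜ
              (fun n => ((q n : ℝ) - 1) / ∏ i ∈ Finset.range (n + 1), (q i : ℝ)) (m + k)) :=
  sign_variable_cylinder_eq_Icc_general B q hq m c
end

section
/- A number x represented by a sign-variable Cantor series is rational if and only if there exist n ≥ 0 and m ≥ 1 such that σⁿ(x) = σ^{n+m}(x). -/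
/-- The shift operator of a sign-variable Cantor expansion (0-based indexing). -/
noncomputable def signCantorShift (B : Set ℕ) (q ε : ℕ → ℕ) (n : ℕ) : ℝ :=
  ∑' k : ℕ, cantorSign B (n + k) * (ε (n + k) : ℝ) / ∏ i ∈ Finset.Ico n (n + k + 1), (q i : ℝ)

/-!
Writing `Q_n = q_0 ⋯ q_{n-1}`, the shift satisfies `σⁿ⁺¹(x) = q_n σⁿ(x) - a_n ε_n`, hence
`σⁿ(x) = Q_n x - t_n` with `t_n ∈ ℤ`; and `|σⁿ(x)| ≤ 1` because `|a_n ε_n| ≤ q_n - 1` makes the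
series for `σⁿ(x)` dominated by a telescoping one. If `x = p / d`, every `σⁿ(x)` lies in the finite
set `d⁻¹ℤ ∩ [-1, 1]`, so two of them coincide. Conversely, `Q_n x - t_n = Q_{n+m} x - t_{n+m}` with
`Q_n < Q_{n+m}` solves to a rational `x`.
-/

open Finset

noncomputable def cantorValue (q d : ℕ → ℝ) : ℝ :=
  ∑' k, d k / ∏ i ∈ range (k + 1), q i

section cantorValue

variable {q d : ℕ → ℝ}

lemma one_le_of_abs_le_sub_one (hd : ∀ k, |d k| ≤ q k - 1) (k : ℕ) : 1 ≤ q k := by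
  linarith [hd k, abs_nonneg (d k)]

lemma prod_range_pos_of_abs_le_sub_one (hd : ∀ k, |d k| ≤ q k - 1) (n : ℕ) :
    0 < ∏ i ∈ range n, q i :=
  prod_pos fun i _ => zero_lt_one.trans_le (one_le_of_abs_le_sub_one hd i)

lemma abs_div_prod_range_le (hd : ∀ k, |d k| ≤ q k - 1) (k : ℕ) :
    |d k / ∏ i ∈ range (k + 1), q i| ≤
      (∏ i ∈ range k, q i)⁻¹ - (∏ i ∈ range (k + 1), q i)⁻¹ := by
  have hP := prod_range_pos_of_abs_le_sub_one hd k
  have hqk := one_le_of_abs_le_sub_one hd k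
  rw [prod_range_succ, abs_div, abs_of_pos (mul_pos hP (by linarith)),
    show (∏ i ∈ range k, q i)⁻¹ - ((∏ i ∈ range k, q i) * q k)⁻¹ =
      (q k - 1) / ((∏ i ∈ range k, q i) * q k) by field_simp]
  gcongr
  exact hd k

lemma sum_range_inv_prod_sub_le_one (hd : ∀ k, |d k| ≤ q k - 1) (n : ℕ) :
    ∑ k ∈ range n, ((∏ i ∈ range k, q i)⁻¹ - (∏ i ∈ range (k + 1), q i)⁻¹) ≤ 1 := by
  rw [sum_range_sub' (fun k => (∏ i ∈ range k, q i)⁻¹), range_zero, prod_empty, inv_one,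
    sub_le_self_iff]
  exact (inv_pos.2 (prod_range_pos_of_abs_le_sub_one hd n)).le

lemma summable_cantorValue (hd : ∀ k, |d k| ≤ q k - 1) :
    Summable fun k => d k / ∏ i ∈ range (k + 1), q i :=
  .of_norm_bounded (summable_of_sum_range_le (fun k => (abs_nonneg _).trans
    (abs_div_prod_range_le hd k)) (sum_range_inv_prod_sub_le_one hd)) (abs_div_prod_range_le hd)

lemma abs_cantorValue_le_one (hd : ∀ k, |d k| ≤ q k - 1) : |cantorValue q d| ≤ 1 := by
  have hnonneg k := (abs_nonneg _).trans (abs_div_prod_range_le hd k)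
  calc |cantorValue q d|
      ≤ ∑' k, ((∏ i ∈ range k, q i)⁻¹ - (∏ i ∈ range (k + 1), q i)⁻¹) :=
        tsum_of_norm_bounded (f := fun k => d k / ∏ i ∈ range (k + 1), q i)
          (summable_of_sum_range_le hnonneg (sum_range_inv_prod_sub_le_one hd)).hasSum
          (abs_div_prod_range_le hd)
    _ ≤ 1 := Real.tsum_le_of_sum_range_le hnonneg (sum_range_inv_prod_sub_le_one hd)

lemma cantorValue_tail (hd : ∀ k, |d k| ≤ q k - 1) :
    cantorValue (fun i => q (i + 1)) (fun i => d (i + 1)) = q 0 * cantorValue q d - d 0 := by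
  have hq0 : q 0 ≠ 0 := (zero_lt_one.trans_le (one_le_of_abs_le_sub_one hd 0)).ne'
  rw [cantorValue, cantorValue, (summable_cantorValue hd).tsum_eq_zero_add, mul_add,
    ← tsum_mul_left]
  simp only [prod_range_succ' _ (_ + 1), zero_add, range_one, prod_singleton]
  have h (k : ℕ) : q 0 * (d (k + 1) / ((∏ i ∈ range (k + 1), q (i + 1)) * q 0)) =
      d (k + 1) / ∏ i ∈ range (k + 1), q (i + 1) := by
    field_simp
  simp only [h]
  field_simp
  ring

end cantorValue

section signCantorShift

variable (B : Set ℕ) {q ε : ℕ → ℕ}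

lemma exists_cantorSign_eq_intCast (n : ℕ) : ∃ z : ℤ, cantorSign B n = z := by
  unfold cantorSign
  split_ifs
  exacts [⟨-1, by simp⟩, ⟨1, by simp⟩]

lemma abs_cantorSign_mul_le (hq : ∀ k, 1 ≤ q k) (hε : ∀ k, ε k ≤ q k - 1) (k : ℕ) :
    |cantorSign B k * ε k| ≤ (q k : ℝ) - 1 := by
  have hεk : (ε k : ℝ) ≤ (q k : ℝ) - 1 := by
    rw [← Nat.cast_one, ← Nat.cast_sub (hq k)]
    exact Nat.cast_le.2 (hε k)
  unfold cantorSign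
  split_ifs <;> simpa using hεk

lemma signCantorShift_eq_cantorValue (n : ℕ) :
    signCantorShift B q ε n =
      cantorValue (fun i => q (n + i)) (fun i => cantorSign B (n + i) * ε (n + i)) := by
  unfold signCantorShift cantorValue
  refine tsum_congr fun k => ?_
  rw [prod_Ico_eq_prod_range, show n + k + 1 - n = k + 1 by omega]

lemma signCantorShift_zero :
    signCantorShift B q ε 0 = ∑' n, cantorSign B n * ε n / ∏ i ∈ range (n + 1), (q i : ℝ) := by
  simp only [signCantorShift, zero_add, Nat.Ico_zero_eq_range]

variable {B}

lemma signCantorShift_succ (hq : ∀ k, 1 ≤ q k) (hε : ∀ k, ε k ≤ q k - 1) (n : ℕ) :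
    signCantorShift B q ε (n + 1) = q n * signCantorShift B q ε n - cantorSign B n * ε n := by
  have h := cantorValue_tail fun k => abs_cantorSign_mul_le B hq hε (n + k)
  simp only [add_zero] at h
  rw [signCantorShift_eq_cantorValue, signCantorShift_eq_cantorValue, ← h]
  simp only [add_assoc, add_comm 1]

lemma abs_signCantorShift_le_one (hq : ∀ k, 1 ≤ q k) (hε : ∀ k, ε k ≤ q k - 1) (n : ℕ) :
    |signCantorShift B q ε n| ≤ 1 := by
  rw [signCantorShift_eq_cantorValue]
  exact abs_cantorValue_le_one fun k => abs_cantorSign_mul_le B hq hε (n + k)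

lemma exists_signCantorShift_eq_prod_mul_sub (hq : ∀ k, 1 ≤ q k) (hε : ∀ k, ε k ≤ q k - 1)
    (n : ℕ) : ∃ t : ℤ, signCantorShift B q ε n =
      ((∏ i ∈ range n, q i : ℕ) : ℝ) * signCantorShift B q ε 0 - t := by
  induction n with
  | zero => exact ⟨0, by simp⟩
  | succ n ih =>
    obtain ⟨t, ht⟩ := ih
    obtain ⟨s, hs⟩ := exists_cantorSign_eq_intCast B n
    refine ⟨q n * t + s * ε n, ?_⟩
    rw [signCantorShift_succ hq hε, ht, hs, prod_range_succ]
    push_cast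
    ring

end signCantorShift

lemma strictMono_prod_range {q : ℕ → ℕ} (hq : ∀ k, 2 ≤ q k) :
    StrictMono fun n => ∏ i ∈ range n, q i := by
  refine strictMono_nat_of_lt_succ fun n => ?_
  have hpos : 0 < ∏ i ∈ range n, q i := prod_pos fun i _ => zero_lt_two.trans_le (hq i)
  rw [prod_range_succ]
  nlinarith [hq n]

lemma exists_lt_eq_of_abs_le_one_of_mul_eq_intCast {u : ℕ → ℝ} {d : ℕ} (hd : 0 < d)
    (hu : ∀ n, |u n| ≤ 1) (hint : ∀ n, ∃ z : ℤ, d * u n = z) :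
    ∃ a b, a < b ∧ u a = u b := by
  refine ((Set.finite_Icc (-(d : ℤ)) d).image fun z : ℤ => (z : ℝ) / d)
    |>.exists_lt_map_eq_of_forall_mem fun n => ?_
  obtain ⟨z, hz⟩ := hint n
  have hd' : (0 : ℝ) < d := Nat.cast_pos.2 hd
  have hzd : |(z : ℝ)| ≤ d := by
    rw [← hz, abs_mul, abs_of_pos hd']
    exact mul_le_of_le_one_right hd'.le (hu n)
  refine ⟨z, Set.mem_Icc.2 (abs_le.1 (by exact_mod_cast hzd)), ?_⟩
  simp only [← hz]
  field_simp

/-- A number `x` represented by a sign-variable Cantor series is rational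
iff there exist `n ≥ 0` and `m ≥ 1` such that `σⁿ(x) = σ^{n+m}(x)`. -/
theorem sign_variable_rational_iff_shift_eq (B : Set ℕ) (q ε : ℕ → ℕ) (hq : ∀ k, 2 ≤ q k)
    (hε : ∀ k, ε k ≤ q k - 1) (x : ℝ)
    (hx : x = ∑' n : ℕ, cantorSign B n * (ε n : ℝ) / ∏ i ∈ Finset.range (n + 1), (q i : ℝ)) :
    (∃ r : ℚ, x = (r : ℝ)) ↔
      ∃ n m : ℕ, 1 ≤ m ∧ signCantorShift B q ε n = signCantorShift B q ε (n + m) := by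
  have hq₁ k : 1 ≤ q k := one_le_two.trans (hq k)
  rw [← signCantorShift_zero] at hx
  have haffine := exists_signCantorShift_eq_prod_mul_sub (B := B) hq₁ hε
  constructor
  · rintro ⟨r, hr⟩
    obtain ⟨a, b, hab, heq⟩ := exists_lt_eq_of_abs_le_one_of_mul_eq_intCast r.den_pos
      (abs_signCantorShift_le_one hq₁ hε) fun n => by
        obtain ⟨t, ht⟩ := haffine n
        refine ⟨(∏ i ∈ range n, q i : ℕ) * r.num - r.den * t, ?_⟩
        have hnum : (r.den : ℝ) * r = r.num := by exact_mod_cast Rat.den_mul_eq_num r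
        rw [ht, ← hx, hr]
        push_cast
        rw [← hnum]
        ring
    exact ⟨a, b - a, by omega, by rwa [Nat.add_sub_cancel' hab.le]⟩
  · rintro ⟨n, m, hm, heq⟩
    obtain ⟨s, hs⟩ := haffine n
    obtain ⟨t, ht⟩ := haffine (n + m)
    have hlt : ∏ i ∈ range n, q i < ∏ i ∈ range (n + m), q i :=
      strictMono_prod_range hq (by omega)
    have hne : ((∏ i ∈ range (n + m), q i : ℕ) : ℝ) - (∏ i ∈ range n, q i : ℕ) ≠ 0 :=
      sub_ne_zero.2 (Nat.cast_injective.ne hlt.ne')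
    refine ⟨(t - s : ℤ) / ((∏ i ∈ range (n + m), q i : ℕ) - (∏ i ∈ range n, q i : ℕ) : ℚ), ?_⟩
    rw [hs, ht, ← hx] at heq
    push_cast at heq hne ⊢
    rw [eq_div_iff hne]
    linear_combination -heq
end

section
/- The sequence s_k = ∑_{n > k, n ∈ N_B} (q_n − 1)/(q_{k+1} q_{k+2} ⋯ q_n) satisfies the recurrence s_k = q_k s_{k−1} if k ∉ N_B and s_k = q_k s_{k−1} − (q_k − 1) if k ∈ N_B, with s_1 = ∑_{k > 1, k ∈ N_B} (q_k − 1)/(q_2⋯q_k); moreover 0 ≤ s_k ≤ 1 for all k. -/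
/-!
Write `P k n = q (k+1) ⋯ q n`. The summand `(q n - 1) / P k n` of `s_k` equals
`(P k (n-1))⁻¹ - (P k n)⁻¹`, and `P k n → ∞` since every factor is at least `2`, so summing over all
`n > k` telescopes to `1`; restricting to `n ∈ N_B` gives `0 ≤ s_k ≤ 1`. Multiplying by `q (k+1)`
removes the first factor of every `P k n`, turning the summands of `s_k` into those of `s_{k+1}`,
except the first one (`n = k+1`), which becomes `q (k+1) - 1`.
-/

/-- `s_k = ∑_{n > k, n ∈ N_B} (q_n − 1)/(q_{k+1} ⋯ q_n)` (0-based indexing: `sSeq B q k`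
is the paper's `s_{k+1}`, summing over 0-based indices `n = k+1+j`). -/
noncomputable def sSeq (B : Set ℕ) (q : ℕ → ℕ) (k : ℕ) : ℝ :=
  ∑' j : ℕ, Set.indicator B
    (fun n => ((q n : ℝ) - 1) / ∏ i ∈ Finset.Ico (k + 1) (n + 1), (q i : ℝ)) (k + 1 + j)

open Finset Filter Topology

namespace SSeq

variable {x : ℕ → ℝ} {c : ℝ} {k n : ℕ}

noncomputable def term (x : ℕ → ℝ) (k n : ℕ) : ℝ :=
  (x n - 1) / ∏ i ∈ Ico (k + 1) (n + 1), x i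

noncomputable def tailSum (B : Set ℕ) (x : ℕ → ℝ) (k : ℕ) : ℝ :=
  ∑' j, B.indicator (term x k) (k + 1 + j)

lemma term_nonneg (hx : ∀ i, 1 ≤ x i) : 0 ≤ term x k n :=
  div_nonneg (sub_nonneg.2 (hx n)) (prod_nonneg fun i _ => zero_le_one.trans (hx i))

lemma term_eq_sub (hx : ∀ i, x i ≠ 0) (hkn : k < n) :
    term x k n = (∏ i ∈ Ico (k + 1) n, x i)⁻¹ - (∏ i ∈ Ico (k + 1) (n + 1), x i)⁻¹ := by
  have hP : ∏ i ∈ Ico (k + 1) n, x i ≠ 0 := prod_ne_zero_iff.2 fun i _ => hx i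
  rw [term, prod_Ico_succ_top (by omega)]
  field_simp [hx n]

lemma mul_term_of_lt (hk : x (k + 1) ≠ 0) (hkn : k + 1 < n) :
    x (k + 1) * term x k n = term x (k + 1) n := by
  rw [term, term, prod_eq_prod_Ico_succ_bot (by omega), mul_div_assoc', mul_div_mul_left _ _ hk]

lemma mul_term_self (hk : x (k + 1) ≠ 0) : x (k + 1) * term x k (k + 1) = x (k + 1) - 1 := by
  rw [term, Nat.Ico_succ_singleton, prod_singleton, mul_div_cancel₀ _ hk]

lemma tendsto_inv_prod_Ico_atTop (hc : 1 < c) (hx : ∀ i, c ≤ x i) :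
    Tendsto (fun j => (∏ i ∈ Ico (k + 1) (k + 1 + j), x i)⁻¹) atTop (𝓝 0) := by
  refine Tendsto.inv_tendsto_atTop
    (tendsto_atTop_mono (fun j => ?_) (tendsto_pow_atTop_atTop_of_one_lt hc))
  calc c ^ j = ∏ _i ∈ Ico (k + 1) (k + 1 + j), c := by simp
    _ ≤ ∏ i ∈ Ico (k + 1) (k + 1 + j), x i :=
      prod_le_prod (fun _ _ => by linarith) fun i _ => hx i

lemma hasSum_term (hc : 1 < c) (hx : ∀ i, c ≤ x i) :
    HasSum (fun j => term x k (k + 1 + j)) 1 := by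
  have hx1 : ∀ i, 1 ≤ x i := fun i => hc.le.trans (hx i)
  set a := fun j => (∏ i ∈ Ico (k + 1) (k + 1 + j), x i)⁻¹
  have htel : ∀ j, term x k (k + 1 + j) = a j - a (j + 1) := fun j =>
    term_eq_sub (fun i => (zero_lt_one.trans_le (hx1 i)).ne') (by omega)
  rw [hasSum_iff_tendsto_nat_of_nonneg fun j => term_nonneg hx1]
  simp only [htel, sum_range_sub']
  simpa [a] using (tendsto_inv_prod_Ico_atTop hc hx).const_sub (a 0)

lemma indicator_term_nonneg (B : Set ℕ) (hx : ∀ i, 1 ≤ x i) : 0 ≤ B.indicator (term x k) n :=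
  Set.indicator_nonneg (fun _ _ => term_nonneg hx) n

lemma indicator_term_le (B : Set ℕ) (hx : ∀ i, 1 ≤ x i) : B.indicator (term x k) n ≤ term x k n :=
  Set.indicator_le_self' (fun _ _ => term_nonneg hx) n

lemma summable_indicator_term (B : Set ℕ) (hc : 1 < c) (hx : ∀ i, c ≤ x i) :
    Summable fun j => B.indicator (term x k) (k + 1 + j) :=
  have hx1 : ∀ i, 1 ≤ x i := fun i => hc.le.trans (hx i)
  (hasSum_term hc hx).summable.of_nonneg_of_le (fun _ => indicator_term_nonneg B hx1)
    fun _ => indicator_term_le B hx1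

lemma tailSum_nonneg (B : Set ℕ) (hx : ∀ i, 1 ≤ x i) : 0 ≤ tailSum B x k :=
  tsum_nonneg fun _ => indicator_term_nonneg B hx

lemma tailSum_le_one (B : Set ℕ) (hc : 1 < c) (hx : ∀ i, c ≤ x i) : tailSum B x k ≤ 1 :=
  hasSum_le (fun _ => indicator_term_le B fun i => hc.le.trans (hx i))
    (summable_indicator_term B hc hx).hasSum (hasSum_term hc hx)

lemma mul_tailSum (B : Set ℕ) (hc : 1 < c) (hx : ∀ i, c ≤ x i) (k : ℕ) :
    x (k + 1) * tailSum B x k = B.indicator (fun n => x n - 1) (k + 1) + tailSum B x (k + 1) := by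
  classical
  have hk : x (k + 1) ≠ 0 := (zero_lt_one.trans (hc.trans_le (hx _))).ne'
  rw [tailSum, ← tsum_mul_left, ((summable_indicator_term B hc hx).mul_left _).tsum_eq_zero_add]
  congr 1
  · rw [add_zero, Set.indicator_apply, Set.indicator_apply, mul_ite, mul_zero, mul_term_self hk]
  · refine tsum_congr fun j => ?_
    rw [show k + 1 + (j + 1) = k + 1 + 1 + j by omega, Set.indicator_apply, Set.indicator_apply,
      mul_ite, mul_zero, mul_term_of_lt hk (by omega)]

end SSeq

/-- The sequence `s_k` satisfies `s_k = q_k s_{k−1}` if `k ∉ N_B`,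
`s_k = q_k s_{k−1} − (q_k − 1)` if `k ∈ N_B`, and `0 ≤ s_k ≤ 1` for all `k`. -/
theorem sSeq_recurrence_and_bounds (B : Set ℕ) (q : ℕ → ℕ) (hq : ∀ n, 2 ≤ q n) :
    (∀ k : ℕ, (k + 1) ∉ B → sSeq B q (k + 1) = (q (k + 1) : ℝ) * sSeq B q k)
      ∧ (∀ k : ℕ, (k + 1) ∈ B →
          sSeq B q (k + 1) = (q (k + 1) : ℝ) * sSeq B q k - ((q (k + 1) : ℝ) - 1))
      ∧ ∀ k : ℕ, 0 ≤ sSeq B q k ∧ sSeq B q k ≤ 1 := by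
  have hx : ∀ n, (2 : ℝ) ≤ q n := fun n => mod_cast hq n
  have hs : sSeq B q = SSeq.tailSum B (fun n => q n) := rfl
  have hrec := SSeq.mul_tailSum B one_lt_two hx
  refine ⟨fun k hk => ?_, fun k hk => ?_, fun k => ?_⟩
  · have := hrec k
    rw [Set.indicator_of_notMem hk, zero_add] at this
    rw [hs, this]
  · have := hrec k
    rw [Set.indicator_of_mem hk] at this
    rw [hs, this]
    ring
  · rw [hs]
    exact ⟨SSeq.tailSum_nonneg B fun i => one_le_two.trans (hx i),
      SSeq.tailSum_le_one B one_lt_two hx⟩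
end

section
/- If x = ∑_{n=1}^∞ a_n ε_n/(q_1⋯q_n) = p/r where p ∈ ℤ, r ∈ ℕ, gcd(|p|, r) = 1, |p| < r, and x lies in the half-open cylinder [inf Λ_{ε_1…ε_k}, sup Λ_{ε_1…ε_k}) for each k, then ε_k = |⌊q_k(Δ_{k−1} − a_{k−1} r ε_{k−1})/r + s_k⌋| for all k ≥ 2, where Δ_1 = p q_1, ε_1 = |⌊Δ_1/r + s_1⌋|, Δ_k = q_k(Δ_{k−1} − a_{k−1} r ε_{k−1}), and s_k is defined by s_1 = ∑_{k > 1, k ∈ N_B}(q_k−1)/(q_2⋯q_k) with s_k = q_k s_{k−1} if k ∉ N_B and s_k = q_k s_{k−1} − (q_k − 1) if k ∈ N_B. -/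
open Classical in
noncomputable def cantorSignZ (B : Set ℕ) (n : ℕ) : ℤ :=
  if n ∈ B then -1 else 1

open Finset Filter Topology

namespace SignVariable

lemma cantorSignZ_cast (B : Set ℕ) (n : ℕ) : (cantorSignZ B n : ℝ) = cantorSign B n := by
  unfold cantorSign cantorSignZ; split_ifs <;> norm_num

lemma abs_cantorSignZ (B : Set ℕ) (n : ℕ) : |cantorSignZ B n| = 1 := by
  unfold cantorSignZ; split_ifs <;> norm_num

/-- The paper's `∑_{k<n∈S} (q_n−1)/(q_1⋯q_n)`, 0-based: the cylinder `Λ_{ε_1…ε_{k+1}}` extends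
`tailSum q B k` below and `tailSum q Bᶜ k` above its left end `partialSum B q ε (k + 1)`. -/
noncomputable def tailSum (q : ℕ → ℕ) (S : Set ℕ) (k : ℕ) : ℝ :=
  ∑' j : ℕ, S.indicator
    (fun n => ((q n : ℝ) - 1) / ∏ i ∈ range (n + 1), (q i : ℝ)) (k + 1 + j)

noncomputable def partialSum (B : Set ℕ) (q ε : ℕ → ℕ) (k : ℕ) : ℝ :=
  ∑ i ∈ range k, cantorSign B i * (ε i : ℝ) / ∏ j ∈ range (i + 1), (q j : ℝ)

variable {q : ℕ → ℕ}

lemma prod_range_cast_pos (hq : ∀ n, q n ≠ 0) (s : Finset ℕ) : 0 < ∏ i ∈ s, (q i : ℝ) :=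
  prod_pos fun i _ => by have := hq i; positivity

lemma tendsto_inv_prod_range_atTop (hq : ∀ n, 2 ≤ q n) :
    Tendsto (fun n => (∏ i ∈ range n, (q i : ℝ))⁻¹) atTop (𝓝 0) := by
  refine tendsto_inv_atTop_zero.comp <|
    tendsto_atTop_mono (fun n => ?_) (tendsto_pow_atTop_atTop_of_one_lt one_lt_two)
  calc (2 : ℝ) ^ n = ∏ _i ∈ range n, (2 : ℝ) := by simp
    _ ≤ ∏ i ∈ range n, (q i : ℝ) :=
      prod_le_prod (fun _ _ => zero_le_two) fun i _ => by exact_mod_cast hq i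

lemma weight_eq_inv_prod_sub (hq : ∀ n, q n ≠ 0) (n : ℕ) :
    ((q n : ℝ) - 1) / ∏ i ∈ range (n + 1), (q i : ℝ)
      = (∏ i ∈ range n, (q i : ℝ))⁻¹ - (∏ i ∈ range (n + 1), (q i : ℝ))⁻¹ := by
  have := prod_range_cast_pos hq (range n)
  have := hq n
  rw [prod_range_succ]
  field_simp

lemma hasSum_tail_weight (hq : ∀ n, 2 ≤ q n) (k : ℕ) :
    HasSum (fun j => ((q (k + 1 + j) : ℝ) - 1) / ∏ i ∈ range (k + 1 + j + 1), (q i : ℝ))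
      (∏ i ∈ range (k + 1), (q i : ℝ))⁻¹ := by
  have hq0 : ∀ n, q n ≠ 0 := fun n => by have := hq n; omega
  set f : ℕ → ℝ := fun j => (∏ i ∈ range (k + 1 + j), (q i : ℝ))⁻¹
  have hf : Tendsto f atTop (𝓝 0) := by
    refine ((tendsto_add_atTop_iff_nat (k + 1)).mpr (tendsto_inv_prod_range_atTop hq)).congr ?_
    intro j; simp only [f, add_comm]
  simp only [weight_eq_inv_prod_sub hq0]
  rw [hasSum_iff_tendsto_nat_of_nonneg]
  · have := hf.const_sub (f 0)
    rw [sub_zero] at this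
    convert this using 2 with n
    exact sum_range_sub' f n
  · intro j
    rw [← weight_eq_inv_prod_sub hq0]
    have := prod_range_cast_pos hq0 (range (k + 1 + j + 1))
    have : (1 : ℝ) ≤ q (k + 1 + j) := by exact_mod_cast (hq _).trans' one_le_two
    positivity

lemma tailSum_add_tailSum_compl (hq : ∀ n, 2 ≤ q n) (S : Set ℕ) (k : ℕ) :
    tailSum q S k + tailSum q Sᶜ k = (∏ i ∈ range (k + 1), (q i : ℝ))⁻¹ := by
  have hsum := hasSum_tail_weight hq k
  have hind : ∀ T : Set ℕ, Summable fun j => T.indicator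
      (fun n => ((q n : ℝ) - 1) / ∏ i ∈ range (n + 1), (q i : ℝ)) (k + 1 + j) := fun T =>
    (hsum.summable.indicator ((k + 1 + ·) ⁻¹' T)).congr fun _ => rfl
  rw [tailSum, tailSum, ← (hind S).tsum_add (hind Sᶜ), ← hsum.tsum_eq]
  exact tsum_congr fun j => Set.indicator_self_add_compl_apply S _ _

lemma sSeq_eq_prod_mul_tailSum (hq : ∀ n, q n ≠ 0) (B : Set ℕ) (k : ℕ) :
    sSeq B q k = (∏ i ∈ range (k + 1), (q i : ℝ)) * tailSum q B k := by
  rw [tailSum, ← tsum_mul_left]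
  refine tsum_congr fun j => ?_
  by_cases hB : k + 1 + j ∈ B
  · rw [Set.indicator_of_mem hB, Set.indicator_of_mem hB,
      ← prod_range_mul_prod_Ico _ (by omega : k + 1 ≤ k + 1 + j + 1)]
    have := prod_range_cast_pos hq (range (k + 1))
    have := prod_range_cast_pos hq (Ico (k + 1) (k + 1 + j + 1))
    field_simp
  · rw [Set.indicator_of_notMem hB, Set.indicator_of_notMem hB, mul_zero]

lemma div_eq_prod_mul_sub_partialSum (hq : ∀ n, q n ≠ 0) {B : Set ℕ} {ε : ℕ → ℕ} {p : ℤ}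
    {r : ℕ} (hr : r ≠ 0) {Δ : ℕ → ℤ} (hΔ0 : Δ 0 = p * q 0)
    (hΔ : ∀ k, Δ (k + 1) = (q (k + 1) : ℤ) * (Δ k - cantorSignZ B k * r * ε k)) (k : ℕ) :
    (Δ k : ℝ) / r = (∏ i ∈ range (k + 1), (q i : ℝ)) * ((p : ℝ) / r - partialSum B q ε k) := by
  induction k with
  | zero => simp [hΔ0, partialSum, mul_div_right_comm, mul_comm]
  | succ k ih =>
    have := prod_range_cast_pos hq (range (k + 1))
    have : (r : ℝ) ≠ 0 := by exact_mod_cast hr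
    rw [hΔ, partialSum, sum_range_succ, ← partialSum, prod_range_succ _ (k + 1)]
    push_cast [cantorSignZ_cast]
    rw [div_eq_iff this] at ih
    rw [ih]
    field_simp
    ring

lemma floor_mul_eq_of_mem_cylinder {P L U y : ℝ} {m : ℤ} (hP : 0 < P) (hLU : L + U = P⁻¹)
    (hlo : m / P - L ≤ y) (hhi : y < m / P + U) : ⌊P * (y + L)⌋ = m := by
  rw [Int.floor_eq_iff]
  constructor
  · calc (m : ℝ) = P * (m / P - L + L) := by rw [sub_add_cancel, mul_div_cancel₀ _ hP.ne']
      _ ≤ P * (y + L) := by gcongr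
  · calc P * (y + L) < P * (m / P + U + L) := by gcongr
      _ = m + 1 := by rw [add_assoc, add_comm U, hLU, mul_add, mul_div_cancel₀ _ hP.ne',
        mul_inv_cancel₀ hP.ne']

lemma floor_eq_sign_mul_digit (hq : ∀ n, 2 ≤ q n) {B : Set ℕ} {ε : ℕ → ℕ} {x : ℝ} {k : ℕ}
    (hlo : partialSum B q ε (k + 1) - tailSum q B k ≤ x)
    (hhi : x < partialSum B q ε (k + 1) + tailSum q Bᶜ k) :
    ⌊(∏ i ∈ range (k + 1), (q i : ℝ)) * (x - partialSum B q ε k) + sSeq B q k⌋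
      = cantorSignZ B k * ε k := by
  have hq0 : ∀ n, q n ≠ 0 := fun n => by have := hq n; omega
  rw [sSeq_eq_prod_mul_tailSum hq0, ← mul_add]
  rw [partialSum, sum_range_succ, ← partialSum] at hlo hhi
  apply floor_mul_eq_of_mem_cylinder (prod_range_cast_pos hq0 _)
    (tailSum_add_tailSum_compl hq B k) <;> push_cast [cantorSignZ_cast] <;> linarith

end SignVariable

open SignVariable in
theorem sign_variable_digits_of_rational_general (B : Set ℕ) (q : ℕ → ℕ) (hq : ∀ n, 2 ≤ q n)
    (ε : ℕ → ℕ)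
    (p : ℤ) (r : ℕ) (hr : 0 < r)
    (x : ℝ)
    (hxr : x = (p : ℝ) / r)
    (hcyl : ∀ k : ℕ,
      (∑ i ∈ Finset.range (k + 1),
          cantorSign B i * (ε i : ℝ) / ∏ j ∈ Finset.range (i + 1), (q j : ℝ))
        - (∑' j : ℕ, Set.indicator B
            (fun n => ((q n : ℝ) - 1) / ∏ i ∈ Finset.range (n + 1), (q i : ℝ)) (k + 1 + j))
        ≤ x
      ∧ x < (∑ i ∈ Finset.range (k + 1),
          cantorSign B i * (ε i : ℝ) / ∏ j ∈ Finset.range (i + 1), (q j : ℝ))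
        + (∑' j : ℕ, Set.indicator Bᶜ
            (fun n => ((q n : ℝ) - 1) / ∏ i ∈ Finset.range (n + 1), (q i : ℝ)) (k + 1 + j)))
    (Δ : ℕ → ℤ)
    (hΔ0 : Δ 0 = p * q 0)
    (hΔ : ∀ k, Δ (k + 1) = (q (k + 1) : ℤ) * (Δ k - cantorSignZ B k * r * ε k)) :
    (ε 0 : ℤ) = |⌊(Δ 0 : ℝ) / r + sSeq B q 0⌋|
      ∧ ∀ k : ℕ, (ε (k + 1) : ℤ) =
          |⌊((q (k + 1) : ℝ) * ((Δ k : ℝ) - (cantorSignZ B k : ℝ) * r * ε k)) / r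
              + sSeq B q (k + 1)⌋| := by
  have hq0 : ∀ n, q n ≠ 0 := fun n => by have := hq n; omega
  have hdigit : ∀ k, (ε k : ℤ) = |⌊(Δ k : ℝ) / r + sSeq B q k⌋| := fun k => by
    rw [div_eq_prod_mul_sub_partialSum hq0 hr.ne' hΔ0 hΔ, ← hxr,
      floor_eq_sign_mul_digit hq (hcyl k).1 (hcyl k).2, abs_mul, abs_cantorSignZ, one_mul,
      Int.abs_natCast]
  refine ⟨hdigit 0, fun k => ?_⟩
  rw [hdigit (k + 1), hΔ k]
  push_cast
  rfl

/-- If `x = ∑ a_n ε_n/(q_1⋯q_n) = p/r` in lowest terms with `|p| < r`, and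
`x` lies in the half-open cylinder `[inf Λ_{ε_1…ε_k}, sup Λ_{ε_1…ε_k})` for each `k`, then
`ε_1 = |⌊Δ_1/r + s_1⌋|` and `ε_k = |⌊q_k(Δ_{k−1} − a_{k−1} r ε_{k−1})/r + s_k⌋|` for `k ≥ 2`,
where `Δ_1 = p q_1` and `Δ_k = q_k(Δ_{k−1} − a_{k−1} r ε_{k−1})`.
(0-based indexing throughout: `ε k`, `Δ k`, `sSeq B q k` are the paper's `ε_{k+1}`,
`Δ_{k+1}`, `s_{k+1}`.) -/
theorem sign_variable_digits_of_rational (B : Set ℕ) (q : ℕ → ℕ) (hq : ∀ n, 2 ≤ q n)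
    (ε : ℕ → ℕ) (hε : ∀ n, ε n ≤ q n - 1)
    (p : ℤ) (r : ℕ) (hr : 0 < r) (hpr : p.natAbs < r) (hcop : Nat.Coprime p.natAbs r)
    (x : ℝ)
    (hx : x = ∑' n : ℕ, cantorSign B n * (ε n : ℝ) / ∏ i ∈ Finset.range (n + 1), (q i : ℝ))
    (hxr : x = (p : ℝ) / r)
    (hcyl : ∀ k : ℕ,
      (∑ i ∈ Finset.range (k + 1),
          cantorSign B i * (ε i : ℝ) / ∏ j ∈ Finset.range (i + 1), (q j : ℝ))
        - (∑' j : ℕ, Set.indicator B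
            (fun n => ((q n : ℝ) - 1) / ∏ i ∈ Finset.range (n + 1), (q i : ℝ)) (k + 1 + j))
        ≤ x
      ∧ x < (∑ i ∈ Finset.range (k + 1),
          cantorSign B i * (ε i : ℝ) / ∏ j ∈ Finset.range (i + 1), (q j : ℝ))
        + (∑' j : ℕ, Set.indicator Bᶜ
            (fun n => ((q n : ℝ) - 1) / ∏ i ∈ Finset.range (n + 1), (q i : ℝ)) (k + 1 + j)))
    (Δ : ℕ → ℤ)
    (hΔ0 : Δ 0 = p * q 0)
    (hΔ : ∀ k, Δ (k + 1) = (q (k + 1) : ℤ) * (Δ k - cantorSignZ B k * r * ε k)) :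
    (ε 0 : ℤ) = |⌊(Δ 0 : ℝ) / r + sSeq B q 0⌋|
      ∧ ∀ k : ℕ, (ε (k + 1) : ℤ) =
          |⌊((q (k + 1) : ℝ) * ((Δ k : ℝ) - (cantorSignZ B k : ℝ) * r * ε k)) / r
              + sSeq B q (k + 1)⌋| :=
  sign_variable_digits_of_rational_general B q hq ε p r hr x hxr hcyl Δ hΔ0 hΔ
end
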